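/- Define φ(t) = (1/(2t θ₃(it))) · (1 + 2∑_{j≥1} e^{−πtj²}(1 − 4πtj²)) for t > 0, where θ₃(it) = ∑_{j∈ℤ} e^{−πtj²}. Then φ(1) = 0 and the numerator 1 + 2∑_{j≥1} e^{−πtj²}(1 − 4πtj²) is strictly increasing for t ≥ 1; consequently the L²-invariant t ↦ ∑_{l,j∈ℤ} exp(−π(l² + j²t²)/t) restricted to the imaginary axis has a unique critical point at t = 1 in [1,∞). -/

import Mathlib

/-!
Write `θ(t) = ∑_{n∈ℤ} e^{-πtn²}`. Splitting the double sum gives `L2inv t = θ(1/t) θ(t)`, and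
the modular relation `θ(1/t) = √t θ(t)` turns this into `L2inv t = √t θ(t)²`, whose logarithmic
derivative is `(θ(t) + 4tθ'(t)) / (2tθ(t)) = φ(t)`; the numerator `θ + 4tθ'` is `thetaNum`.
Differentiating the modular relation at its fixed point `t = 1` gives `θ(1) + 4θ'(1) = 0`.
Each summand `e^{-x}(1 - 4x)` of `thetaNum`, with `x = πtj² ≥ π > 5/4`, increases in `t`, so
`t = 1` is the only zero of `thetaNum`, hence of `(L2inv)'`, on `[1, ∞)`.
-/

/-- The numerator `1 + 2∑_{j≥1} e^{−πtj²}(1 − 4πtj²)`. -/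
noncomputable def thetaNum (t : ℝ) : ℝ :=
  1 + 2 * ∑' j : ℕ, Real.exp (-Real.pi * t * ((j : ℝ) + 1) ^ 2) *
    (1 - 4 * Real.pi * t * ((j : ℝ) + 1) ^ 2)

/-- The Jacobi theta function `θ₃(it) = ∑_{j∈ℤ} e^{−πtj²}`. -/
noncomputable def theta3 (t : ℝ) : ℝ := ∑' j : ℤ, Real.exp (-Real.pi * t * (j : ℝ) ^ 2)

/-- `φ(t) = (1/(2t θ₃(it))) (1 + 2∑_{j≥1} e^{−πtj²}(1 − 4πtj²))`. -/
noncomputable def phiL2 (t : ℝ) : ℝ := (1 / (2 * t * theta3 t)) * thetaNum t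

/-- The `L²`-invariant `∑_{l,j∈ℤ} exp(−π(l² + j²t²)/t)` along the imaginary axis. -/
noncomputable def L2inv (t : ℝ) : ℝ :=
  ∑' lj : ℤ × ℤ, Real.exp (-Real.pi * ((lj.1 : ℝ) ^ 2 + (lj.2 : ℝ) ^ 2 * t ^ 2) / t)

open Real Set Filter Topology

noncomputable def theta3Deriv (t : ℝ) : ℝ :=
  ∑' n : ℤ, -π * (n : ℝ) ^ 2 * exp (-π * t * (n : ℝ) ^ 2)

noncomputable def thetaNumTerm (t x : ℝ) : ℝ := exp (-π * t * x ^ 2) * (1 - 4 * π * t * x ^ 2)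

lemma tsum_int_eq_zero_add_two_nsmul_tsum_nat {G : Type*} [AddCommGroup G] [UniformSpace G]
    [IsUniformAddGroup G] [CompleteSpace G] [T2Space G] {f : ℤ → G} (hf : f.Even)
    (hs : Summable f) : ∑' n, f n = f 0 + 2 • ∑' n : ℕ, f ((n : ℤ) + 1) := by
  rw [tsum_int_eq_zero_add_two_mul_tsum_pnat hf hs,
    tsum_pnat_eq_tsum_succ (f := fun n : ℕ => f n)]
  push_cast
  rfl

lemma strictMonoOn_exp_neg_mul_one_sub_four_mul :
    StrictMonoOn (fun x => exp (-x) * (1 - 4 * x)) (Ici (5 / 4)) := by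
  have hderiv (x : ℝ) :
      HasDerivAt (fun x => exp (-x) * (1 - 4 * x)) (exp (-x) * (4 * x - 5)) x :=
    ((hasDerivAt_neg x).exp.mul (((hasDerivAt_id' x).const_mul 4).const_sub 1)).congr_deriv
      (by ring)
  refine strictMonoOn_of_hasDerivWithinAt_pos (convex_Ici _) (by fun_prop)
    (fun x _ => (hderiv x).hasDerivWithinAt) fun x hx => ?_
  rw [interior_Ici, mem_Ioi] at hx
  have : 0 < 4 * x - 5 := by linarith
  positivity

section Summability

variable {t : ℝ}

lemma summable_exp_neg_pi_mul_sq (ht : 0 < t) :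
    Summable fun n : ℤ => exp (-π * t * (n : ℝ) ^ 2) := by
  simpa only [pow_zero, one_mul, mul_zero, zero_mul, sub_zero, mul_assoc]
    using summable_pow_mul_jacobiTheta₂_term_bound 0 ht 0

lemma summable_sq_mul_exp_neg_pi_mul_sq (ht : 0 < t) :
    Summable fun n : ℤ => (n : ℝ) ^ 2 * exp (-π * t * (n : ℝ) ^ 2) := by
  simpa only [Int.cast_abs, sq_abs, mul_zero, zero_mul, sub_zero, mul_assoc]
    using summable_pow_mul_jacobiTheta₂_term_bound 0 ht 2

lemma summable_thetaNumTerm_int (ht : 0 < t) : Summable fun n : ℤ => thetaNumTerm t n := by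
  refine ((summable_exp_neg_pi_mul_sq ht).sub
    ((summable_sq_mul_exp_neg_pi_mul_sq ht).mul_left (4 * π * t))).congr fun n => ?_
  simp only [thetaNumTerm]
  ring

lemma summable_thetaNumTerm_nat (ht : 0 < t) :
    Summable fun j : ℕ => thetaNumTerm t ((j : ℝ) + 1) := by
  refine ((summable_nat_add_iff 1).mpr
    ((summable_thetaNumTerm_int ht).comp_injective Nat.cast_injective)).congr fun j => ?_
  simp only [Function.comp, Nat.cast_add, Nat.cast_one, Int.cast_add, Int.cast_natCast,
    Int.cast_one]

end Summability

section Theta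

variable {t : ℝ}

lemma theta3_pos (ht : 0 < t) : 0 < theta3 t :=
  (summable_exp_neg_pi_mul_sq ht).tsum_pos (fun _ => (exp_pos _).le) 0 (exp_pos _)

lemma hasDerivAt_theta3 (ht : 0 < t) : HasDerivAt theta3 (theta3Deriv t) t := by
  have hbound (n : ℤ) (y : ℝ) (hy : y ∈ Ioi (t / 2)) :
      ‖-π * (n : ℝ) ^ 2 * exp (-π * y * (n : ℝ) ^ 2)‖
        ≤ π * ((n : ℝ) ^ 2 * exp (-π * (t / 2) * (n : ℝ) ^ 2)) := by
    rw [norm_mul, norm_mul, norm_neg, Real.norm_of_nonneg pi_pos.le,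
      Real.norm_of_nonneg (sq_nonneg _), Real.norm_of_nonneg (exp_pos _).le, ← mul_assoc]
    have : π * (t / 2) < π * y := mul_lt_mul_of_pos_left (mem_Ioi.mp hy) pi_pos
    gcongr π * _ * exp ?_
    nlinarith [sq_nonneg (n : ℝ)]
  refine hasDerivAt_tsum_of_isPreconnected
    ((summable_sq_mul_exp_neg_pi_mul_sq (half_pos ht)).mul_left π) isOpen_Ioi
    isPreconnected_Ioi (fun n y _ => ?_) hbound (half_lt_self ht)
    (summable_exp_neg_pi_mul_sq ht) (half_lt_self ht)
  exact (((hasDerivAt_id' y).const_mul (-π)).mul_const ((n : ℝ) ^ 2)).exp.congr_deriv (by ring)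

lemma thetaNum_eq_theta3_add (ht : 0 < t) :
    thetaNum t = theta3 t + 4 * t * theta3Deriv t := by
  have hderiv : Summable fun n : ℤ => -π * (n : ℝ) ^ 2 * exp (-π * t * (n : ℝ) ^ 2) :=
    ((summable_sq_mul_exp_neg_pi_mul_sq ht).mul_left (-π)).congr fun n => by ring
  have hsum : theta3 t + 4 * t * theta3Deriv t = ∑' n : ℤ, thetaNumTerm t n := by
    rw [theta3, theta3Deriv, ← tsum_mul_left,
      ← (summable_exp_neg_pi_mul_sq ht).tsum_add (hderiv.mul_left (4 * t))]
    exact tsum_congr fun n => by simp only [thetaNumTerm]; ring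
  have heven : (fun n : ℤ => thetaNumTerm t n).Even := fun n => by
    simp only [thetaNumTerm, Int.cast_neg, neg_sq]
  rw [hsum, tsum_int_eq_zero_add_two_nsmul_tsum_nat heven (summable_thetaNumTerm_int ht)]
  simp only [thetaNum, thetaNumTerm, nsmul_eq_mul, Int.cast_zero, Int.cast_add, Int.cast_natCast,
    Int.cast_one]
  norm_num

lemma theta3_inv (ht : 0 < t) : theta3 t⁻¹ = √t * theta3 t := by
  rw [theta3, theta3, tsum_exp_neg_mul_int_sq ht, ← sqrt_eq_rpow, ← mul_assoc,
    mul_one_div_cancel (sqrt_pos.mpr ht).ne', one_mul]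
  simp only [div_eq_mul_inv]

lemma thetaNum_one : thetaNum 1 = 0 := by
  have hθ := hasDerivAt_theta3 one_pos
  have hθ' : HasDerivAt theta3 (theta3Deriv 1) (1 : ℝ)⁻¹ := by rwa [inv_one]
  have hleft : HasDerivAt (fun s => theta3 s⁻¹) (-theta3Deriv 1) 1 :=
    (hθ'.comp 1 (hasDerivAt_inv one_ne_zero)).congr_deriv (by norm_num)
  have hright : HasDerivAt (fun s => √s * theta3 s) (theta3 1 / 2 + theta3Deriv 1) 1 :=
    ((hasDerivAt_sqrt one_ne_zero).mul hθ).congr_deriv (by rw [sqrt_one]; ring)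
  have hmodular : (fun s => √s * theta3 s) =ᶠ[𝓝 1] fun s => theta3 s⁻¹ := by
    filter_upwards [Ioi_mem_nhds one_pos] with s hs
    exact (theta3_inv hs).symm
  have := (hright.congr_of_eventuallyEq hmodular.symm).unique hleft
  rw [thetaNum_eq_theta3_add one_pos]
  linarith

lemma thetaNumTerm_strictMonoOn {x : ℝ} (hx : 1 ≤ x ^ 2) :
    StrictMonoOn (fun t => thetaNumTerm t x) (Ici 1) := by
  have hmaps : MapsTo (fun t => π * x ^ 2 * t) (Ici 1) (Ici (5 / 4)) := fun t ht => by
    have h₁ : π ≤ π * x ^ 2 := le_mul_of_one_le_right pi_pos.le hx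
    have h₂ : π * x ^ 2 ≤ π * x ^ 2 * t := le_mul_of_one_le_right (by positivity) ht
    exact mem_Ici.mpr (by linarith [pi_gt_three])
  convert strictMonoOn_exp_neg_mul_one_sub_four_mul.comp
    (fun s _ t _ hst => mul_lt_mul_of_pos_left hst (mul_pos pi_pos (one_pos.trans_le hx)) :
      StrictMonoOn (fun t => π * x ^ 2 * t) (Ici 1)) hmaps using 1
  ext t
  simp only [thetaNumTerm, Function.comp]
  rw [show -(π * x ^ 2 * t) = -π * t * x ^ 2 by ring]
  ring

lemma thetaNum_strictMonoOn : StrictMonoOn thetaNum (Ici 1) := by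
  intro s hs t ht hst
  have hterm (j : ℕ) : thetaNumTerm s ((j : ℝ) + 1) < thetaNumTerm t ((j : ℝ) + 1) :=
    thetaNumTerm_strictMonoOn (one_le_pow₀ (le_add_of_nonneg_left j.cast_nonneg)) hs ht hst
  have := Summable.tsum_lt_tsum (fun j => (hterm j).le) (hterm 0)
    (summable_thetaNumTerm_nat (zero_lt_one.trans_le hs))
    (summable_thetaNumTerm_nat (zero_lt_one.trans_le ht))
  simp only [thetaNum]
  exact add_lt_add_right (mul_lt_mul_of_pos_left this two_pos) 1

end Theta

section L2inv

variable {t : ℝ}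

lemma L2inv_eq (ht : 0 < t) : L2inv t = √t * theta3 t ^ 2 := by
  have hsplit (lj : ℤ × ℤ) :
      exp (-π * ((lj.1 : ℝ) ^ 2 + (lj.2 : ℝ) ^ 2 * t ^ 2) / t)
        = exp (-π * t⁻¹ * (lj.1 : ℝ) ^ 2) * exp (-π * t * (lj.2 : ℝ) ^ 2) := by
    rw [← exp_add]
    congr 1
    field_simp
    ring
  have hnorm {u : ℝ} (hu : 0 < u) : Summable fun n : ℤ => ‖exp (-π * u * (n : ℝ) ^ 2)‖ := by
    simpa only [norm_of_nonneg (exp_pos _).le] using summable_exp_neg_pi_mul_sq hu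
  rw [L2inv, tsum_congr hsplit,
    ← tsum_mul_tsum_of_summable_norm (hnorm (inv_pos.mpr ht)) (hnorm ht)]
  change theta3 t⁻¹ * theta3 t = _
  rw [theta3_inv ht]
  ring

lemma L2inv_pos (ht : 0 < t) : 0 < L2inv t := by
  rw [L2inv_eq ht]
  have := theta3_pos ht
  have := sqrt_pos.mpr ht
  positivity

lemma hasDerivAt_L2inv (ht : 0 < t) : HasDerivAt L2inv (L2inv t * phiL2 t) t := by
  have hlocal : (fun s => √s * theta3 s ^ 2) =ᶠ[𝓝 t] L2inv := by
    filter_upwards [Ioi_mem_nhds ht] with s hs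
    exact (L2inv_eq hs).symm
  refine (((hasDerivAt_sqrt ht.ne').mul ((hasDerivAt_theta3 ht).pow 2)).congr_of_eventuallyEq
    hlocal.symm).congr_deriv ?_
  have hθ := (theta3_pos ht).ne'
  have hsqrt := (sqrt_pos.mpr ht).ne'
  rw [Pi.pow_apply, L2inv_eq ht, phiL2, thetaNum_eq_theta3_add ht]
  field_simp
  rw [sq_sqrt ht.le]
  ring

lemma deriv_L2inv_eq_zero_iff (ht : 0 < t) : deriv L2inv t = 0 ↔ thetaNum t = 0 := by
  rw [(hasDerivAt_L2inv ht).deriv, phiL2, mul_eq_zero, mul_eq_zero]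
  have := theta3_pos ht
  simp only [(L2inv_pos ht).ne', one_div, inv_eq_zero, false_or]
  exact or_iff_right (by positivity)

end L2inv

/-- `φ(1) = 0`, the numerator is strictly increasing for `t ≥ 1`, and
consequently the `L²`-invariant restricted to the imaginary axis has a unique
critical point at `t = 1` in `[1,∞)`. -/
theorem L2_invariant_critical_point :
    phiL2 1 = 0 ∧ StrictMonoOn thetaNum (Set.Ici 1) ∧
    ∀ t ∈ Set.Ici (1 : ℝ), (deriv L2inv t = 0 ↔ t = 1) := by
  refine ⟨by rw [phiL2, thetaNum_one, mul_zero], thetaNum_strictMonoOn, fun t ht => ?_⟩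
  rw [deriv_L2inv_eq_zero_iff (zero_lt_one.trans_le ht), ← thetaNum_one]
  exact thetaNum_strictMonoOn.injOn.eq_iff ht self_mem_Ici
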